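/- arXiv:1306.4891 — 4 statements merged into one kernel-verified Lean document; each statement's English description precedes it below -/
import Mathlib

section
/- For every positive integer n, Φ(n) = ∑_{d ∣ n} μ(d)·(2^{n/d} − 1), where μ is the Möbius function and the sum is over positive divisors d of n. -/
/-- `Phi n` is the number of nonempty subsets of `{1, ..., n}` relatively prime to `n`. -/
def Phi (n : ℕ) : ℕ :=
  ((Finset.Icc 1 n).powerset.filter fun A => A.Nonempty ∧ (insert n A).gcd id = 1).card

/-!
Write the indicator of `gcd (A ∪ {n}) = 1` as `∑_{d ∣ gcd (A ∪ {n})} μ d` and exchange the two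
sums. For `d ∣ n`, the sets `A` with `d ∣ gcd (A ∪ {n})` are exactly the nonempty subsets of the
`n / d` multiples of `d` in `{1, ..., n}`, so there are `2 ^ (n / d) - 1` of them.
-/

open Finset ArithmeticFunction
open scoped ArithmeticFunction.Moebius

theorem ArithmeticFunction.sum_divisors_moebius (n : ℕ) :
    ∑ d ∈ n.divisors, (μ d : ℤ) = if n = 1 then 1 else 0 := by
  rw [← coe_mul_zeta_apply, moebius_mul_coe_zeta, one_apply]

theorem Finset.card_filter_nonempty_powerset {α : Type*} (s : Finset α) :
    #{A ∈ s.powerset | A.Nonempty} = 2 ^ #s - 1 := by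
  classical
  rw [← card_powerset, ← card_erase_of_mem (empty_mem_powerset s)]
  congr 1
  ext A
  simp [nonempty_iff_ne_empty, and_comm]

theorem Finset.filter_powerset_and_forall_mem {α : Type*} (s : Finset α) (p : α → Prop)
    [DecidablePred p] (q : Finset α → Prop) [DecidablePred q] :
    {A ∈ s.powerset | q A ∧ ∀ a ∈ A, p a} = {A ∈ (s.filter p).powerset | q A} := by
  ext A
  simp only [mem_filter, mem_powerset, subset_iff]
  grind

theorem Nat.card_filter_Icc_dvd (n d : ℕ) : #{x ∈ Icc 1 n | d ∣ x} = n / d :=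
  Nat.Ioc_filter_dvd_card_eq_div n d

theorem Nat.dvd_gcd_insert_iff {d n : ℕ} {A : Finset ℕ} :
    d ∣ (insert n A).gcd id ↔ d ∣ n ∧ ∀ a ∈ A, d ∣ a := by
  simp only [Finset.dvd_gcd_iff, forall_mem_insert, id]

theorem card_filter_dvd_gcd_insert {n d : ℕ} (hd : d ∣ n) :
    #{A ∈ (Icc 1 n).powerset | A.Nonempty ∧ d ∣ (insert n A).gcd id} = 2 ^ (n / d) - 1 := by
  simp only [Nat.dvd_gcd_insert_iff, hd, true_and]
  rw [filter_powerset_and_forall_mem, card_filter_nonempty_powerset, Nat.card_filter_Icc_dvd]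

theorem Phi_formula_general (n : ℕ) :
    (Phi n : ℤ) = ∑ d ∈ n.divisors,
      (ArithmeticFunction.moebius d) * (2 ^ (n / d) - 1) := by
  obtain rfl | hn := eq_or_ne n 0
  · simp [Phi]
  set S := {A ∈ (Icc 1 n).powerset | A.Nonempty}
  have gcd_dvd_n (A : Finset ℕ) : (insert n A).gcd id ∣ n := gcd_dvd (mem_insert_self n A)
  calc (Phi n : ℤ) = ∑ A ∈ S, ∑ d ∈ ((insert n A).gcd id).divisors, (μ d : ℤ) := by
        simp only [sum_divisors_moebius, sum_boole, Phi, S, filter_filter]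
    _ = ∑ A ∈ S, ∑ d ∈ n.divisors, if d ∣ (insert n A).gcd id then (μ d : ℤ) else 0 := by
        simp only [← sum_filter, Nat.divisors_filter_dvd_of_dvd hn (gcd_dvd_n _)]
    _ = ∑ d ∈ n.divisors, μ d * (2 ^ (n / d) - 1) := by
        rw [sum_comm]
        refine sum_congr rfl fun d hd => ?_
        rw [← sum_filter, sum_const, filter_filter,
          card_filter_dvd_gcd_insert (Nat.dvd_of_mem_divisors hd), nsmul_eq_mul, mul_comm,
          Nat.cast_pred (Nat.two_pow_pos _), Nat.cast_pow, Nat.cast_ofNat]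

/-- Nathanson: `Φ(n) = ∑_{d ∣ n} μ(d) (2^{n/d} - 1)`. -/
theorem Phi_formula (n : ℕ) (hn : 0 < n) :
    (Phi n : ℤ) = ∑ d ∈ n.divisors,
      (ArithmeticFunction.moebius d) * (2 ^ (n / d) - 1) :=
  Phi_formula_general n
end

section
/- The sequence |∑_{n=1}^{N} f(n) − 2^{N+1}| / 2^{⌊N/2⌋}, restricted to even positive integers N, tends to 3 as N → ∞. -/
/-- `f n` is the number of nonempty relatively prime subsets of `{1, ..., n}`. -/
def f (n : ℕ) : ℕ :=
  ((Finset.Icc 1 n).powerset.filter fun A => A.Nonempty ∧ A.gcd id = 1).card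

open Finset Filter

lemma Mcard (n d : ℕ) : ((Finset.Icc 1 n).filter (fun x => d ∣ x)).card = n / d := by
  rw [show Finset.Icc 1 n = Finset.Ioc 0 n from Finset.Icc_add_one_left_eq_Ioc 0 n]
  exact Nat.Ioc_filter_dvd_card_eq_div n d

lemma f_upper (n : ℕ) : f n + 2 ^ (n / 2) ≤ 2 ^ n := by
  classical
  set Fs := ((Finset.Icc 1 n).powerset.filter fun A => A.Nonempty ∧ A.gcd id = 1) with hFs
  set E := ((Finset.Icc 1 n).filter (fun x => 2 ∣ x)).powerset with hE
  have hEcard : E.card = 2 ^ (n / 2) := by rw [hE, card_powerset, Mcard]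
  have hdisj : Disjoint Fs E := by
    rw [Finset.disjoint_left]
    intro A hA hA2
    simp only [hFs, hE, mem_filter, mem_powerset] at hA hA2
    obtain ⟨-, hne, hgcd⟩ := hA
    have h2 : 2 ∣ A.gcd id := Finset.dvd_gcd fun b hb => (mem_filter.1 (hA2 hb)).2
    omega
  have hsub : Fs ∪ E ⊆ (Finset.Icc 1 n).powerset := by
    intro A hA
    rcases mem_union.1 hA with h | h
    · exact (mem_filter.1 h).1
    · exact mem_powerset.2 ((mem_powerset.1 h).trans (filter_subset _ _))
  calc f n + 2 ^ (n / 2) = (Fs ∪ E).card := by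
        rw [card_union_of_disjoint hdisj, hEcard]; rfl
    _ ≤ (Finset.Icc 1 n).powerset.card := card_le_card hsub
    _ = 2 ^ n := by rw [card_powerset, Nat.card_Icc]; norm_num

lemma f_lower (n : ℕ) : 2 ^ n ≤ f n + 2 ^ (n / 2) + n * 2 ^ (n / 3) + 1 := by
  classical
  set Fs := ((Finset.Icc 1 n).powerset.filter fun A => A.Nonempty ∧ A.gcd id = 1) with hFs
  set B := (Finset.Icc 2 n).biUnion
      (fun d => ((Finset.Icc 1 n).filter (fun x => d ∣ x)).powerset) with hB
  have hsub : (Finset.Icc 1 n).powerset ⊆ insert ∅ (Fs ∪ B) := by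
    intro A hA
    rcases eq_or_ne A ∅ with rfl | hne
    · exact mem_insert_self _ _
    apply mem_insert_of_mem
    have hAne : A.Nonempty := nonempty_iff_ne_empty.2 hne
    rcases eq_or_ne (A.gcd id) 1 with hg | hg
    · exact mem_union_left _ (mem_filter.2 ⟨hA, hAne, hg⟩)
    · apply mem_union_right
      obtain ⟨a, ha⟩ := hAne
      have haI : a ∈ Finset.Icc 1 n := mem_powerset.1 hA ha
      have hd : A.gcd id ∣ a := Finset.gcd_dvd ha
      simp only [mem_Icc] at haI
      have hdle : A.gcd id ≤ n := le_trans (Nat.le_of_dvd (by omega) hd) haI.2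
      have hd2 : 2 ≤ A.gcd id := by
        have h0 : A.gcd id ≠ 0 := by
          intro h; rw [h] at hd
          have := Nat.eq_zero_of_zero_dvd hd; omega
        omega
      refine mem_biUnion.2 ⟨A.gcd id, mem_Icc.2 ⟨hd2, hdle⟩, mem_powerset.2 ?_⟩
      intro b hb
      exact mem_filter.2 ⟨mem_powerset.1 hA hb, Finset.gcd_dvd hb⟩
  have hBcard : B.card ≤ 2 ^ (n / 2) + n * 2 ^ (n / 3) := by
    calc B.card ≤ ∑ d ∈ Finset.Icc 2 n, 2 ^ (n / d) := by
          refine le_trans card_biUnion_le (le_of_eq ?_)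
          exact Finset.sum_congr rfl fun d _ => by rw [card_powerset, Mcard]
      _ ≤ ∑ d ∈ insert 2 (Finset.Icc 3 n), 2 ^ (n / d) := by
          apply Finset.sum_le_sum_of_subset
          intro d hd; simp only [mem_Icc, mem_insert] at *; omega
      _ ≤ 2 ^ (n / 2) + n * 2 ^ (n / 3) := by
          rw [Finset.sum_insert (by simp)]
          have : ∑ d ∈ Finset.Icc 3 n, 2 ^ (n / d) ≤ ∑ d ∈ Finset.Icc 3 n, 2 ^ (n / 3) := by
            apply Finset.sum_le_sum
            intro d hd
            exact Nat.pow_le_pow_right (by norm_num) (Nat.div_le_div_left (mem_Icc.1 hd).1 (by norm_num))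
          simp only [Finset.sum_const, smul_eq_mul, Nat.card_Icc] at this ⊢
          have : (n + 1 - 3) * 2 ^ (n / 3) ≤ n * 2 ^ (n / 3) :=
            Nat.mul_le_mul_right _ (by omega)
          omega
  calc 2 ^ n = (Finset.Icc 1 n).powerset.card := by rw [card_powerset, Nat.card_Icc]; norm_num
    _ ≤ (insert ∅ (Fs ∪ B)).card := card_le_card hsub
    _ ≤ 1 + (Fs.card + B.card) := le_trans (card_insert_le _ _) (by
          have := card_union_le Fs B; omega)
    _ ≤ f n + 2 ^ (n / 2) + n * 2 ^ (n / 3) + 1 := by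
          have : Fs.card = f n := rfl
          omega

lemma sum_pow_real (N : ℕ) : ∑ n ∈ Finset.Icc 1 N, (2:ℝ)^n = 2^(N+1) - 2 := by
  induction N with
  | zero => simp
  | succ N ih => rw [Finset.sum_Icc_succ_top (by omega), ih]; ring

lemma sum_half_real (k : ℕ) : ∑ n ∈ Finset.Icc 1 (2*k), (2:ℝ)^(n/2) = 3*2^k - 3 := by
  induction k with
  | zero => simp
  | succ k ih =>
    have h1 : 2*(k+1) = (2*k+1)+1 := by ring
    rw [h1, Finset.sum_Icc_succ_top (by omega), Finset.sum_Icc_succ_top (by omega), ih]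
    have e1 : (2*k+1)/2 = k := by omega
    have e2 : (2*k+1+1)/2 = k+1 := by omega
    rw [e1, e2]; ring

lemma key_bound (N : ℕ) (hN : Even N)
    (hup : ∀ n, (f n : ℝ) ≤ 2^n - 2^(n/2))
    (hlo : ∀ n : ℕ, (2:ℝ)^n - 2^(n/2) - ((n:ℝ)*2^(n/3) + 1) ≤ (f n : ℝ)) :
    abs (|(∑ n ∈ Finset.Icc 1 N, (f n : ℝ)) - 2^(N+1)| / 2^(N/2) - 3) ≤ ((N:ℝ)^2+N+1)/2^(N/6) := by
  obtain ⟨k, hk⟩ := hN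
  have hNk : N = 2*k := by omega
  set s := ∑ n ∈ Finset.Icc 1 N, (f n : ℝ) with hs
  set u := (2:ℝ)^(N+1) with hu
  set v := (2:ℝ)^(N/2) with hv
  have hvpos : (0:ℝ) < v := by positivity
  have hsumh : ∑ n ∈ Finset.Icc 1 N, (2:ℝ)^(n/2) = 3*v - 3 := by
    rw [hNk, sum_half_real k, hv, hNk]
    norm_num
  have hsum2 : ∑ n ∈ Finset.Icc 1 N, (2:ℝ)^n = u - 2 := sum_pow_real N
  have hsup : s ≤ u - 2 - (3*v - 3) := by
    calc s ≤ ∑ n ∈ Finset.Icc 1 N, ((2:ℝ)^n - 2^(n/2)) := Finset.sum_le_sum fun n _ => hup n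
      _ = u - 2 - (3*v - 3) := by rw [Finset.sum_sub_distrib, hsum2, hsumh]
  have herr : ∑ n ∈ Finset.Icc 1 N, ((n:ℝ)*2^(n/3) + 1) ≤ (N:ℝ)^2*2^(N/3) + N := by
    have hb : ∀ n ∈ Finset.Icc 1 N, (n:ℝ)*2^(n/3) + 1 ≤ (N:ℝ)*2^(N/3) + 1 := by
      intro n hn
      have hn' := (Finset.mem_Icc.1 hn).2
      have h1 : (n:ℝ) ≤ N := by exact_mod_cast hn'
      have h2 : (2:ℝ)^(n/3) ≤ 2^(N/3) :=
        pow_le_pow_right₀ one_le_two (Nat.div_le_div_right hn')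
      have : (n:ℝ)*2^(n/3) ≤ (N:ℝ)*2^(N/3) :=
        mul_le_mul h1 h2 (by positivity) (by positivity)
      linarith
    calc ∑ n ∈ Finset.Icc 1 N, ((n:ℝ)*2^(n/3) + 1)
        ≤ (Finset.Icc 1 N).card • ((N:ℝ)*2^(N/3) + 1) := Finset.sum_le_card_nsmul _ _ _ hb
      _ = (N:ℝ) * ((N:ℝ)*2^(N/3) + 1) := by rw [Nat.card_Icc, nsmul_eq_mul]; norm_num
      _ = (N:ℝ)^2*2^(N/3) + N := by ring
  have hslo : u - 2 - (3*v - 3) - ((N:ℝ)^2*2^(N/3) + N) ≤ s := by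
    have h1 : ∑ n ∈ Finset.Icc 1 N, ((2:ℝ)^n - 2^(n/2) - ((n:ℝ)*2^(n/3) + 1)) ≤ s :=
      Finset.sum_le_sum fun n _ => hlo n
    rw [Finset.sum_sub_distrib, Finset.sum_sub_distrib, hsum2, hsumh] at h1
    linarith
  set X := (N:ℝ)^2*2^(N/3) + N with hX
  have hXnn : (0:ℝ) ≤ X := by positivity
  have hD : |s - u + 3*v| ≤ X + 1 := abs_le.2 ⟨by linarith, by linarith⟩
  have habs : abs (|s - u| - 3*v) ≤ |s - u + 3*v| := by
    have h := abs_abs_sub_abs_le_abs_sub (s - u) (-(3*v))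
    rw [abs_neg, abs_of_pos (show (0:ℝ) < 3*v by linarith), sub_neg_eq_add] at h
    exact h
  have hstep : abs (|s - u| / v - 3) = abs (|s - u| - 3*v) / v := by
    have he : |s - u| / v - 3 = (|s - u| - 3*v)/v := by field_simp
    rw [he, abs_div, abs_of_pos hvpos]
  rw [hstep]
  have hnum : abs (|s - u| - 3*v) ≤ X + 1 := habs.trans hD
  have h2 : (1:ℝ) ≤ 2^(N/3) := one_le_pow₀ one_le_two
  have h1 : X + 1 ≤ ((N:ℝ)^2+N+1) * 2^(N/3) := by
    rw [hX]; nlinarith [Nat.cast_nonneg (α := ℝ) N]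
  have h3 : ((N:ℝ)^2+N+1) * 2^(N/3) / v ≤ ((N:ℝ)^2+N+1)/2^(N/6) := by
    rw [hv, div_le_div_iff₀ (by positivity) (by positivity)]
    calc ((N:ℝ)^2+N+1) * 2^(N/3) * 2^(N/6) = ((N:ℝ)^2+N+1) * 2^(N/3+N/6) := by
          rw [pow_add]; ring
      _ ≤ ((N:ℝ)^2+N+1) * 2^(N/2) := by
          apply mul_le_mul_of_nonneg_left (pow_le_pow_right₀ one_le_two (by omega)) (by positivity)
  calc abs (|s - u| - 3*v)/v ≤ (X+1)/v := (div_le_div_iff_of_pos_right hvpos).2 hnum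
    _ ≤ (((N:ℝ)^2+N+1) * 2^(N/3))/v := (div_le_div_iff_of_pos_right hvpos).2 h1
    _ ≤ ((N:ℝ)^2+N+1)/2^(N/6) := h3
lemma aux_tendsto_c :
    Tendsto (fun k : ℕ => ((6*(k:ℝ)+5)^2 + (6*(k:ℝ)+5) + 1)/2^k) atTop (nhds 0) := by
  have t2 := tendsto_pow_const_div_const_pow_of_one_lt 2 (show (1:ℝ) < 2 by norm_num)
  have t1 := tendsto_pow_const_div_const_pow_of_one_lt 1 (show (1:ℝ) < 2 by norm_num)
  have t0 := tendsto_pow_const_div_const_pow_of_one_lt 0 (show (1:ℝ) < 2 by norm_num)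
  have h := ((t2.const_mul (36:ℝ)).add (t1.const_mul (66:ℝ))).add (t0.const_mul (31:ℝ))
  simp only [mul_zero, add_zero] at h
  convert h using 2 with k
  have : (2:ℝ)^k ≠ 0 := by positivity
  field_simp
  ring

lemma aux_tendsto_b :
    Tendsto (fun N : ℕ => ((N:ℝ)^2+N+1)/2^(N/6)) atTop (nhds 0) := by
  have hdiv : Tendsto (fun N : ℕ => N/6) atTop atTop :=
    tendsto_atTop_atTop_of_monotone (fun a b h => Nat.div_le_div_right h)
      (fun b => ⟨6*b, by omega⟩)
  apply squeeze_zero' (Filter.Eventually.of_forall fun N => by positivity)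
    (Filter.Eventually.of_forall ?_) (aux_tendsto_c.comp hdiv)
  intro N
  simp only [Function.comp_apply]
  have hc : (N:ℝ) ≤ 6*((N/6 : ℕ):ℝ)+5 := by
    have : N ≤ 6*(N/6)+5 := by omega
    exact_mod_cast this
  have h0 : (0:ℝ) ≤ (N:ℝ) := Nat.cast_nonneg N
  gcongr

/-- Along even `N`, `|∑_{n ≤ N} f(n) - 2^{N+1}| / 2^{⌊N/2⌋} → 3`. -/
theorem tendsto_f_error_even :
    Filter.Tendsto
      (fun N : ℕ => |(∑ n ∈ Finset.Icc 1 N, (f n : ℝ)) - 2 ^ (N + 1)| / 2 ^ (N / 2))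
      (Filter.atTop ⊓ Filter.principal {N : ℕ | Even N}) (nhds 3) := by
  have hup : ∀ n : ℕ, (f n : ℝ) ≤ 2^n - 2^(n/2) := by
    intro n
    have h := (Nat.cast_le (α := ℝ)).2 (f_upper n)
    push_cast at h; linarith
  have hlo : ∀ n : ℕ, (2:ℝ)^n - 2^(n/2) - ((n:ℝ)*2^(n/3) + 1) ≤ (f n : ℝ) := by
    intro n
    have h := (Nat.cast_le (α := ℝ)).2 (f_lower n)
    push_cast at h; linarith
  have hev : ∀ᶠ N in (Filter.atTop ⊓ Filter.principal {N : ℕ | Even N}),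
      ‖|(∑ n ∈ Finset.Icc 1 N, (f n : ℝ)) - 2 ^ (N + 1)| / 2 ^ (N / 2) - 3‖
        ≤ ((N:ℝ)^2+N+1)/2^(N/6) := by
    rw [Filter.eventually_inf_principal]
    apply Filter.Eventually.of_forall
    intro N hN
    simpa [Real.norm_eq_abs] using key_bound N hN hup hlo
  have h0 : Filter.Tendsto
      (fun N : ℕ => |(∑ n ∈ Finset.Icc 1 N, (f n : ℝ)) - 2 ^ (N + 1)| / 2 ^ (N / 2) - 3)
      (Filter.atTop ⊓ Filter.principal {N : ℕ | Even N}) (nhds 0) :=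
    squeeze_zero_norm' hev (aux_tendsto_b.mono_left inf_le_left)
  have h3 := h0.add_const 3
  simpa using h3
end

section
/- limsup_{N→∞} |∑_{n=1}^{N} f(n) − 2^{N+1}| / 2^{N/2} = 3 and liminf_{N→∞} |∑_{n=1}^{N} f(n) − 2^{N+1}| / 2^{N/2} = 2√2, where 2^{N/2} denotes the real number 2 raised to the power N/2. -/
/-!
Grouping the nonempty subsets of `{1, …, n}` by their gcd `d` and dividing them by `d` gives
`∑_{d ≤ n} f ⌊n/d⌋ = 2^n - 1`. Since `f m < 2^m`, the terms `d ≥ 3` contribute `O(n 2^{n/3})`,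
so `f n = 2^n - f ⌊n/2⌋ + O(n 2^{n/3}) = 2^n - 2^{⌊n/2⌋} + O(n 2^{n/3})`. Summing,
`∑_{n ≤ N} f n - 2^{N+1} = -2 - ∑_{n ≤ N} 2^{⌊n/2⌋} + O(N² 2^{N/3})`, and the last sum is
`3·2^M - 3` for `N = 2M` and `4·2^M - 3` for `N = 2M + 1`. After dividing by `2^{N/2}` the error
tends to `3` along even `N` and to `4/√2 = 2√2` along odd `N`.
-/

open Finset Filter Topology

theorem Finset.gcd_image_mul_left (s : Finset ℕ) (d : ℕ) :
    (s.image (d * ·)).gcd id = d * s.gcd id := by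
  rw [gcd_image, Function.id_comp, gcd_mul_left, normalize_eq]
  rfl

theorem Finset.image_mul_left_image_div {s : Finset ℕ} {d : ℕ} (h : ∀ a ∈ s, d ∣ a) :
    (s.image (· / d)).image (d * ·) = s := by
  rw [image_image]
  conv_rhs => rw [← image_id (s := s)]
  exact image_congr fun a ha => Nat.mul_div_cancel' (h a ha)

theorem Finset.image_div_image_mul_left (s : Finset ℕ) {d : ℕ} (hd : 0 < d) :
    (s.image (d * ·)).image (· / d) = s := by
  rw [image_image]
  conv_rhs => rw [← image_id (s := s)]
  exact image_congr fun a _ => Nat.mul_div_cancel_left a hd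

theorem Finset.image_mul_left_subset_Icc_one_iff {s : Finset ℕ} {d n : ℕ} (hd : 0 < d) :
    s.image (d * ·) ⊆ Icc 1 n ↔ s ⊆ Icc 1 (n / d) := by
  simp only [subset_iff, mem_image, mem_Icc, forall_exists_index, and_imp,
    forall_apply_eq_imp_iff₂, Nat.le_div_iff_mul_le hd, Nat.one_le_iff_ne_zero, mul_comm d,
    mul_ne_zero_iff, hd.ne', ne_eq, not_false_eq_true, and_true]

theorem card_filter_gcd_eq (n : ℕ) {d : ℕ} (hd : 0 < d) :
    ((Icc 1 n).powerset.filter fun A => A.Nonempty ∧ A.gcd id = d).card = f (n / d) := by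
  refine card_nbij' (fun A => A.image (· / d)) (fun B => B.image (d * ·)) ?_ ?_ ?_ ?_
  · intro A hA
    simp only [coe_filter, mem_powerset, Set.mem_ofPred_eq] at hA ⊢
    obtain ⟨hsub, hne, hgcd⟩ := hA
    have hdvd : ∀ a ∈ A, d ∣ a := fun a ha => hgcd ▸ gcd_dvd ha
    rw [← image_mul_left_image_div hdvd] at hsub hgcd
    rw [gcd_image_mul_left] at hgcd
    exact ⟨(image_mul_left_subset_Icc_one_iff hd).1 hsub, hne.image _,
      (Nat.mul_eq_left hd.ne').1 hgcd⟩
  · intro B hB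
    simp only [coe_filter, mem_powerset, Set.mem_ofPred_eq] at hB ⊢
    obtain ⟨hsub, hne, hgcd⟩ := hB
    exact ⟨(image_mul_left_subset_Icc_one_iff hd).2 hsub, hne.image _, by
      rw [gcd_image_mul_left, hgcd, mul_one]⟩
  · intro A hA
    simp only [coe_filter, mem_powerset, Set.mem_ofPred_eq] at hA
    exact image_mul_left_image_div fun a ha => hA.2.2 ▸ gcd_dvd ha
  · intro B _
    exact image_div_image_mul_left B hd

theorem Finset.gcd_mem_Icc_of_subset_Icc {A : Finset ℕ} {n : ℕ} (hA : A ⊆ Icc 1 n)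
    (hne : A.Nonempty) : A.gcd id ∈ Icc 1 n := by
  obtain ⟨a, ha⟩ := hne
  have ha' := mem_Icc.1 (hA ha)
  have hle : A.gcd id ≤ a := Nat.le_of_dvd (by omega) (gcd_dvd ha)
  have hpos : A.gcd id ≠ 0 := fun h => (show a ≠ 0 by omega) (gcd_eq_zero_iff.1 h a ha)
  exact mem_Icc.2 ⟨by omega, by omega⟩

theorem sum_f_div_add_one (n : ℕ) : ∑ d ∈ Icc 1 n, f (n / d) + 1 = 2 ^ n := by
  have hfib := card_eq_sum_card_fiberwise (t := Icc 1 n) (f := fun A => A.gcd id)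
    (s := (Icc 1 n).powerset.filter Finset.Nonempty) fun A hA => by
      simp only [coe_filter, mem_powerset, Set.mem_ofPred_eq] at hA
      exact gcd_mem_Icc_of_subset_Icc hA.1 hA.2
  have hempty : (Icc 1 n).powerset.filter (¬ ·.Nonempty) = {∅} := by
    ext A
    simp only [mem_filter, mem_powerset, not_nonempty_iff_eq_empty, mem_singleton]
    exact ⟨And.right, fun h => ⟨h ▸ empty_subset _, h⟩⟩
  have hsplit := card_filter_add_card_filter_not (s := (Icc 1 n).powerset) Finset.Nonempty
  rw [hempty, card_singleton, card_powerset, Nat.card_Icc, Nat.add_sub_cancel, hfib] at hsplit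
  rw [← hsplit]
  congr 1
  refine sum_congr rfl fun d hd => ?_
  rw [filter_filter, card_filter_gcd_eq n (mem_Icc.1 hd).1]

theorem f_lt_two_pow (m : ℕ) : f m < 2 ^ m := by
  have := card_powerset (Icc 1 m)
  rw [Nat.card_Icc, Nat.add_sub_cancel] at this
  exact this ▸ card_lt_card (filter_ssubset.2 ⟨∅, empty_mem_powerset _, by simp⟩)

theorem f_zero : f 0 = 0 := Nat.lt_one_iff.1 (f_lt_two_pow 0)

theorem f_add_sum_Icc_two_add_one (n : ℕ) : f n + ∑ d ∈ Icc 2 n, f (n / d) + 1 = 2 ^ n := by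
  rcases Nat.eq_zero_or_pos n with rfl | hn
  · simp [f_zero]
  · rw [← sum_f_div_add_one n, ← insert_Icc_add_one_left_eq_Icc (show 1 ≤ n from hn),
      sum_insert (by simp), Nat.div_one]
    rfl

theorem f_add_f_half_add_sum_Icc_three_add_one (n : ℕ) :
    f n + f (n / 2) + ∑ d ∈ Icc 3 n, f (n / d) + 1 = 2 ^ n := by
  rcases Nat.lt_or_ge n 2 with hn | hn
  · rw [Nat.div_eq_of_lt hn, f_zero, Icc_eq_empty (by omega), ← f_add_sum_Icc_two_add_one n,
      Icc_eq_empty (by omega), add_zero]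
  · rw [← f_add_sum_Icc_two_add_one n, ← insert_Icc_add_one_left_eq_Icc hn, sum_insert (by simp),
      add_assoc (f n)]
    rfl

theorem sum_Icc_f_div_le (n : ℕ) {k : ℕ} (hk : 0 < k) :
    ∑ d ∈ Icc k n, f (n / d) ≤ n * 2 ^ (n / k) :=
  calc ∑ d ∈ Icc k n, f (n / d)
      ≤ ∑ _d ∈ Icc k n, 2 ^ (n / k) := sum_le_sum fun d hd =>
        (f_lt_two_pow _).le.trans <|
          Nat.pow_le_pow_right two_pos (Nat.div_le_div_left (mem_Icc.1 hd).1 hk)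
    _ ≤ n * 2 ^ (n / k) := by
      rw [sum_const, Nat.card_Icc, smul_eq_mul]
      exact Nat.mul_le_mul_right _ (by omega)

theorem two_pow_le_f_add (m : ℕ) : 2 ^ m ≤ f m + (m + 1) * 2 ^ (m / 2) := by
  have := sum_Icc_f_div_le m two_pos
  have := Nat.one_le_two_pow (n := m / 2)
  rw [← f_add_sum_Icc_two_add_one m, add_one_mul]
  omega

theorem abs_f_sub_le (n : ℕ) :
    |(f n : ℝ) - 2 ^ n + 2 ^ (n / 2)| ≤ (n + 1) * 2 ^ (n / 3) := by
  have hrec := f_add_f_half_add_sum_Icc_three_add_one n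
  have htail := sum_Icc_f_div_le n three_pos
  have hhalf_lt := f_lt_two_pow (n / 2)
  have hhalf_ge := two_pow_le_f_add (n / 2)
  have hquarter : (n / 2 + 1) * 2 ^ (n / 2 / 2) ≤ (n + 1) * 2 ^ (n / 3) :=
    Nat.mul_le_mul (by omega) (Nat.pow_le_pow_right two_pos (by omega))
  have htail_succ := Nat.mul_le_mul_right (2 ^ (n / 3)) (Nat.le_add_right n 1)
  have hlower : ((2 ^ n : ℕ) : ℝ) ≤ ((f n + 2 ^ (n / 2) + (n + 1) * 2 ^ (n / 3) : ℕ) : ℝ) :=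
    Nat.cast_le.2 (by omega)
  have hupper : ((f n + 2 ^ (n / 2) : ℕ) : ℝ) ≤ ((2 ^ n + (n + 1) * 2 ^ (n / 3) : ℕ) : ℝ) :=
    Nat.cast_le.2 (by omega)
  push_cast at hlower hupper
  rw [abs_le]
  constructor <;> linarith

theorem sum_Icc_two_pow (N : ℕ) : ∑ n ∈ Icc 1 N, (2 : ℝ) ^ n = 2 ^ (N + 1) - 2 := by
  induction N with
  | zero => simp
  | succ N ih => rw [sum_Icc_succ_top (by omega), ih]; ring

theorem sum_Icc_two_pow_half_two_mul (M : ℕ) :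
    ∑ n ∈ Icc 1 (2 * M), (2 : ℝ) ^ (n / 2) = 3 * 2 ^ M - 3 := by
  induction M with
  | zero => simp
  | succ M ih =>
    rw [show 2 * (M + 1) = 2 * M + 1 + 1 by ring, sum_Icc_succ_top (by omega),
      sum_Icc_succ_top (by omega), ih, show (2 * M + 1) / 2 = M by omega,
      show (2 * M + 1 + 1) / 2 = M + 1 by omega]
    ring

theorem sum_Icc_two_pow_half_two_mul_add_one (M : ℕ) :
    ∑ n ∈ Icc 1 (2 * M + 1), (2 : ℝ) ^ (n / 2) = 4 * 2 ^ M - 3 := by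
  rw [sum_Icc_succ_top (by omega), sum_Icc_two_pow_half_two_mul, show (2 * M + 1) / 2 = M by omega]
  ring

theorem abs_sum_f_sub_le (N : ℕ) :
    |(∑ n ∈ Icc 1 N, (f n : ℝ)) - 2 ^ (N + 1) + 2 + ∑ n ∈ Icc 1 N, (2 : ℝ) ^ (n / 2)| ≤
      N * (N + 1) * 2 ^ (N / 3) := by
  have hsum : (∑ n ∈ Icc 1 N, (f n : ℝ)) - 2 ^ (N + 1) + 2 + ∑ n ∈ Icc 1 N, (2 : ℝ) ^ (n / 2) =
      ∑ n ∈ Icc 1 N, ((f n : ℝ) - 2 ^ n + 2 ^ (n / 2)) := by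
    rw [sum_add_distrib, sum_sub_distrib, sum_Icc_two_pow]
    ring
  rw [hsum]
  calc _ ≤ ∑ n ∈ Icc 1 N, |(f n : ℝ) - 2 ^ n + 2 ^ (n / 2)| := abs_sum_le_sum_abs _ _
    _ ≤ ∑ _n ∈ Icc 1 N, ((N : ℝ) + 1) * 2 ^ (N / 3) := sum_le_sum fun n hn => by
        have hn := (mem_Icc.1 hn).2
        refine (abs_f_sub_le n).trans ?_
        gcongr
        exact one_le_two
    _ = N * (N + 1) * 2 ^ (N / 3) := by
        rw [sum_const, Nat.card_Icc, nsmul_eq_mul, Nat.add_sub_cancel, mul_assoc]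

theorem tendsto_mul_succ_mul_two_pow_div_three_div_rpow :
    Tendsto (fun N : ℕ => (N : ℝ) * (N + 1) * 2 ^ (N / 3) / 2 ^ ((N : ℝ) / 2)) atTop (𝓝 0) := by
  set r : ℝ := 2 ^ (6⁻¹ : ℝ)
  have hr : 1 < r := Real.one_lt_rpow (by norm_num) (by norm_num)
  have hbound (N : ℕ) :
      (N : ℝ) * (N + 1) * 2 ^ (N / 3) / 2 ^ ((N : ℝ) / 2) ≤ 2 * ((N : ℝ) ^ 2 / r ^ N) := by
    have hden : (2 : ℝ) ^ (N / 3) * r ^ N ≤ 2 ^ ((N : ℝ) / 2) := by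
      rw [← Real.rpow_natCast, ← Real.rpow_natCast r, ← Real.rpow_mul zero_le_two,
        ← Real.rpow_add two_pos]
      refine Real.rpow_le_rpow_of_exponent_le one_le_two ?_
      have : ((N / 3 : ℕ) : ℝ) ≤ N / 3 := Nat.cast_div_le
      linarith
    have hnum : (N : ℝ) * (N + 1) ≤ 2 * N ^ 2 := by
      have : N * (N + 1) ≤ 2 * N ^ 2 := by nlinarith
      exact_mod_cast this
    calc _ ≤ 2 * N ^ 2 * 2 ^ (N / 3) / (2 ^ (N / 3) * r ^ N) := by gcongr
      _ = 2 * ((N : ℝ) ^ 2 / r ^ N) := by field_simp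
  refine squeeze_zero (fun N => by positivity) hbound ?_
  simpa using (tendsto_pow_const_div_const_pow_of_one_lt 2 hr).const_mul 2

theorem tendsto_sum_f_sub_approx_div :
    Tendsto (fun N : ℕ => ((∑ n ∈ Icc 1 N, (f n : ℝ)) - 2 ^ (N + 1) + 2 +
      ∑ n ∈ Icc 1 N, (2 : ℝ) ^ (n / 2)) / 2 ^ ((N : ℝ) / 2)) atTop (𝓝 0) := by
  refine squeeze_zero_norm (fun N => ?_) tendsto_mul_succ_mul_two_pow_div_three_div_rpow
  have hpos : (0 : ℝ) < 2 ^ ((N : ℝ) / 2) := by positivity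
  rw [norm_div, Real.norm_eq_abs, Real.norm_eq_abs, abs_of_pos hpos]
  exact div_le_div_of_nonneg_right (abs_sum_f_sub_le N) hpos.le

theorem tendsto_abs_sum_f_sub_div_of_tendsto {φ : ℕ → ℕ} (hφ : Tendsto φ atTop atTop) {c : ℝ}
    (hc : Tendsto (fun M => (2 + ∑ n ∈ Icc 1 (φ M), (2 : ℝ) ^ (n / 2)) / 2 ^ ((φ M : ℝ) / 2))
      atTop (𝓝 c)) :
    Tendsto (fun M => |(∑ n ∈ Icc 1 (φ M), (f n : ℝ)) - 2 ^ (φ M + 1)| / 2 ^ ((φ M : ℝ) / 2))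
      atTop (𝓝 |c|) := by
  have := ((tendsto_sum_f_sub_approx_div.comp hφ).sub hc).abs
  rw [zero_sub, abs_neg] at this
  refine this.congr fun M => ?_
  have hpos : (0 : ℝ) < 2 ^ ((φ M : ℝ) / 2) := by positivity
  rw [Function.comp_apply, ← sub_div, abs_div, abs_of_pos hpos]
  congr 2
  ring

theorem tendsto_two_add_sum_two_pow_half_div_two_mul :
    Tendsto (fun M : ℕ => (2 + ∑ n ∈ Icc 1 (2 * M), (2 : ℝ) ^ (n / 2)) /
      2 ^ (((2 * M : ℕ) : ℝ) / 2)) atTop (𝓝 3) := by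
  have hlim : Tendsto (fun M : ℕ => 3 - (2⁻¹ : ℝ) ^ M) atTop (𝓝 3) := by
    simpa using tendsto_const_nhds.sub (tendsto_pow_atTop_nhds_zero_of_lt_one (r := (2⁻¹ : ℝ))
      (by norm_num) (by norm_num))
  refine hlim.congr fun M => ?_
  rw [sum_Icc_two_pow_half_two_mul, Nat.cast_mul, Nat.cast_two, mul_div_cancel_left₀ _ two_ne_zero,
    Real.rpow_natCast, inv_pow]
  field_simp
  ring

theorem tendsto_two_add_sum_two_pow_half_div_two_mul_add_one :
    Tendsto (fun M : ℕ => (2 + ∑ n ∈ Icc 1 (2 * M + 1), (2 : ℝ) ^ (n / 2)) /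
      2 ^ (((2 * M + 1 : ℕ) : ℝ) / 2)) atTop (𝓝 (2 * √2)) := by
  have hsqrt : 2 * √2 = 4 / √2 := by
    rw [eq_div_iff (by positivity), mul_assoc, Real.mul_self_sqrt zero_le_two]; norm_num
  have hlim : Tendsto (fun M : ℕ => (4 - (2⁻¹ : ℝ) ^ M) / √2) atTop (𝓝 (2 * √2)) := by
    rw [hsqrt]
    simpa using (tendsto_const_nhds.sub (tendsto_pow_atTop_nhds_zero_of_lt_one
      (r := (2⁻¹ : ℝ)) (by norm_num) (by norm_num))).div_const √2
  refine hlim.congr fun M => ?_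
  rw [sum_Icc_two_pow_half_two_mul_add_one, show ((2 * M + 1 : ℕ) : ℝ) / 2 = M + 1 / 2 by
      push_cast; ring, Real.rpow_add two_pos, Real.rpow_natCast, ← Real.sqrt_eq_rpow, inv_pow]
  field_simp
  ring

theorem Nat.eventually_atTop_of_even_odd {p : ℕ → Prop} (h₀ : ∀ᶠ n in atTop, p (2 * n))
    (h₁ : ∀ᶠ n in atTop, p (2 * n + 1)) : ∀ᶠ n in atTop, p n := by
  obtain ⟨a, ha⟩ := eventually_atTop.1 h₀
  obtain ⟨b, hb⟩ := eventually_atTop.1 h₁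
  refine eventually_atTop.2 ⟨2 * (a + b), fun n hn => ?_⟩
  obtain ⟨k, rfl | rfl⟩ := n.even_or_odd'
  · exact ha k (by omega)
  · exact hb k (by omega)

section EvenOdd

variable {α : Type*} [ConditionallyCompleteLinearOrder α] [TopologicalSpace α] [OrderTopology α]
  [DenselyOrdered α] {u : ℕ → α} {a b : α}

theorem limsup_eq_max_of_tendsto_even_odd (h₀ : Tendsto (fun n => u (2 * n)) atTop (𝓝 a))
    (h₁ : Tendsto (fun n => u (2 * n + 1)) atTop (𝓝 b)) : limsup u atTop = max a b := by
  have hbdd : IsBoundedUnder (· ≤ ·) atTop u := by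
    obtain ⟨c₀, hc₀⟩ := h₀.isBoundedUnder_le
    obtain ⟨c₁, hc₁⟩ := h₁.isBoundedUnder_le
    exact ⟨max c₀ c₁, Nat.eventually_atTop_of_even_odd (hc₀.mono fun _ h => le_max_of_le_left h)
      (hc₁.mono fun _ h => le_max_of_le_right h)⟩
  have hcobdd : IsCoboundedUnder (· ≤ ·) atTop u := by
    obtain ⟨c₀, hc₀⟩ := h₀.isBoundedUnder_ge
    obtain ⟨c₁, hc₁⟩ := h₁.isBoundedUnder_ge
    exact IsBoundedUnder.isCoboundedUnder_flip ⟨min c₀ c₁, Nat.eventually_atTop_of_even_odd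
      (hc₀.mono fun _ h => min_le_of_left_le h) (hc₁.mono fun _ h => min_le_of_right_le h)⟩
  have le_limsup {v : ℕ → ℕ} (hv : StrictMono v) {c : α} (h : Tendsto (u ∘ v) atTop (𝓝 c)) :
      c ≤ limsup u atTop :=
    h.limsup_eq ▸ hv.tendsto_atTop.limsup_comp_le_limsup h.isCoboundedUnder_le hbdd
  refine le_antisymm (le_of_forall_gt_imp_ge_of_dense fun c hc => ?_)
    (max_le (le_limsup (fun _ _ h => by omega) h₀) (le_limsup (fun _ _ h => by omega) h₁))
  exact limsup_le_of_le hcobdd <| Nat.eventually_atTop_of_even_odd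
    (h₀.eventually (eventually_le_nhds ((le_max_left a b).trans_lt hc)))
    (h₁.eventually (eventually_le_nhds ((le_max_right a b).trans_lt hc)))

theorem liminf_eq_min_of_tendsto_even_odd (h₀ : Tendsto (fun n => u (2 * n)) atTop (𝓝 a))
    (h₁ : Tendsto (fun n => u (2 * n + 1)) atTop (𝓝 b)) : liminf u atTop = min a b :=
  limsup_eq_max_of_tendsto_even_odd (α := αᵒᵈ) h₀ h₁

end EvenOdd

/-- `limsup = 3` and `liminf = 2√2` for `|∑_{n ≤ N} f(n) - 2^{N+1}| / 2^{N/2}`. -/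
theorem limsup_liminf_f_error :
    Filter.limsup
      (fun N : ℕ => |(∑ n ∈ Finset.Icc 1 N, (f n : ℝ)) - 2 ^ (N + 1)| /
        (2 : ℝ) ^ ((N : ℝ) / 2)) Filter.atTop = 3 ∧
    Filter.liminf
      (fun N : ℕ => |(∑ n ∈ Finset.Icc 1 N, (f n : ℝ)) - 2 ^ (N + 1)| /
        (2 : ℝ) ^ ((N : ℝ) / 2)) Filter.atTop = 2 * Real.sqrt 2 := by
  have heven := tendsto_abs_sum_f_sub_div_of_tendsto
    (StrictMono.tendsto_atTop fun _ _ h => by omega) tendsto_two_add_sum_two_pow_half_div_two_mul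
  have hodd := tendsto_abs_sum_f_sub_div_of_tendsto
    (StrictMono.tendsto_atTop fun _ _ h => by omega)
    tendsto_two_add_sum_two_pow_half_div_two_mul_add_one
  rw [abs_of_pos three_pos] at heven
  rw [abs_of_pos (by positivity)] at hodd
  have hlt : 2 * √2 < 3 := by
    nlinarith [Real.sq_sqrt zero_le_two, Real.sqrt_nonneg 2]
  exact ⟨(limsup_eq_max_of_tendsto_even_odd heven hodd).trans (max_eq_left hlt.le),
    (liminf_eq_min_of_tendsto_even_odd heven hodd).trans (min_eq_right hlt.le)⟩
end

section
/- limsup_{N→∞} |∑_{n=1}^{N} Φ(n) − 2^{N+1}| / 2^{N/2} = 2 and liminf_{N→∞} |∑_{n=1}^{N} Φ(n) − 2^{N+1}| / 2^{N/2} = √2, where 2^{N/2} denotes the real number 2 raised to the power N/2. -/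
open Finset Filter

local notation "μ" => ArithmeticFunction.moebius

lemma sum_moebius_divisors (m : ℕ) :
    ∑ d ∈ m.divisors, (μ d : ℤ) = if m = 1 then 1 else 0 := by
  rw [← ArithmeticFunction.coe_mul_zeta_apply, ArithmeticFunction.moebius_mul_coe_zeta,
    ArithmeticFunction.one_apply]

lemma phi_eq (n : ℕ) (hn : 1 ≤ n) :
    (Phi n : ℤ) = ∑ d ∈ n.divisors, μ d * (2 ^ (n / d) - 1) := by
  have key : ∀ A ∈ (Icc 1 n).powerset.filter (fun A => A.Nonempty),
      (if (insert n A).gcd id = 1 then (1:ℤ) else 0)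
        = ∑ d ∈ n.divisors, if d ∣ A.gcd id then (μ d : ℤ) else 0 := by
    intro A _
    have hg : (insert n A).gcd id = Nat.gcd n (A.gcd id) := by
      rw [Finset.gcd_insert]; rfl
    have hgpos : 0 < Nat.gcd n (A.gcd id) := Nat.gcd_pos_of_pos_left _ hn
    have hdiv : (Nat.gcd n (A.gcd id)).divisors = n.divisors.filter (· ∣ A.gcd id) := by
      ext d
      simp only [Nat.mem_divisors, Finset.mem_filter]
      constructor
      · rintro ⟨hd, _⟩
        exact ⟨⟨hd.trans (Nat.gcd_dvd_left _ _), by omega⟩, hd.trans (Nat.gcd_dvd_right _ _)⟩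
      · rintro ⟨⟨h1, _⟩, h2⟩
        exact ⟨Nat.dvd_gcd h1 h2, hgpos.ne'⟩
    rw [hg, ← Finset.sum_filter, ← hdiv, sum_moebius_divisors]
  have hfilter : (Icc 1 n).powerset.filter
        (fun A => A.Nonempty ∧ (insert n A).gcd id = 1)
      = ((Icc 1 n).powerset.filter (fun A => A.Nonempty)).filter
          (fun A => (insert n A).gcd id = 1) := by
    rw [Finset.filter_filter]
  have hcard : ∀ d : ℕ, d ∈ n.divisors →
      (((Icc 1 n).powerset.filter (fun A => A.Nonempty)).filter
        (fun A => d ∣ A.gcd id)).card = 2 ^ (n / d) - 1 := by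
    intro d hd
    have heq : ((Icc 1 n).powerset.filter (fun A => A.Nonempty)).filter
        (fun A => d ∣ A.gcd id)
        = (((Icc 1 n).filter (fun x => d ∣ x)).powerset).filter (fun A => A.Nonempty) := by
      ext A
      simp only [Finset.mem_filter, Finset.mem_powerset, Finset.subset_iff,
        Finset.dvd_gcd_iff, id_eq]
      exact ⟨fun ⟨⟨h1, h2⟩, h3⟩ => ⟨fun x hx => ⟨h1 hx, h3 x hx⟩, h2⟩,
        fun ⟨h1, h2⟩ => ⟨⟨fun x hx => (h1 hx).1, h2⟩, fun x hx => (h1 hx).2⟩⟩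
    have hk : ((Icc 1 n).filter (fun x => d ∣ x)).card = n / d := by
      rw [show Finset.Icc 1 n = Finset.Ioc 0 n from Finset.Icc_add_one_left_eq_Ioc 0 n]
      exact Nat.Ioc_filter_dvd_card_eq_div n d
    have herase : (((Icc 1 n).filter (fun x => d ∣ x)).powerset).filter
        (fun A => A.Nonempty)
        = (((Icc 1 n).filter (fun x => d ∣ x)).powerset).erase ∅ := by
      ext A
      simp [Finset.nonempty_iff_ne_empty, and_comm]
    rw [heq, herase, Finset.card_erase_of_mem (Finset.empty_mem_powerset _),
      Finset.card_powerset, hk]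
  calc (Phi n : ℤ)
      = ∑ A ∈ (Icc 1 n).powerset.filter (fun A => A.Nonempty),
          (if (insert n A).gcd id = 1 then (1:ℤ) else 0) := by
        rw [Phi, hfilter, Finset.sum_boole]
    _ = ∑ A ∈ (Icc 1 n).powerset.filter (fun A => A.Nonempty),
          ∑ d ∈ n.divisors, if d ∣ A.gcd id then (μ d : ℤ) else 0 :=
        Finset.sum_congr rfl key
    _ = ∑ d ∈ n.divisors, ∑ A ∈ (Icc 1 n).powerset.filter (fun A => A.Nonempty),
          if d ∣ A.gcd id then (μ d : ℤ) else 0 := Finset.sum_comm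
    _ = ∑ d ∈ n.divisors, μ d * (2 ^ (n / d) - 1) := by
        refine Finset.sum_congr rfl fun d hd => ?_
        rw [← Finset.sum_filter, Finset.sum_const, hcard d hd, nsmul_eq_mul, mul_comm]
        congr 1
        have : (1:ℕ) ≤ 2 ^ (n / d) := Nat.one_le_two_pow
        push_cast [this]
        ring

lemma swap_divisors (N : ℕ) (f : ℕ → ℕ → ℤ) :
    ∑ n ∈ Icc 1 N, ∑ d ∈ n.divisors, f d (n / d)
      = ∑ d ∈ Icc 1 N, ∑ m ∈ Icc 1 (N / d), f d m := by
  have hL : ∀ n ∈ Icc 1 N, ∑ d ∈ n.divisors, f d (n / d)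
      = ∑ p ∈ n.divisorsAntidiagonal, f p.1 p.2 :=
    fun n _ => (Nat.sum_divisorsAntidiagonal f).symm
  rw [Finset.sum_congr rfl hL]
  rw [← Finset.sum_biUnion (by
    intro a _ b _ hab
    simp only [Finset.disjoint_left]
    intro p hp hq
    rw [Nat.mem_divisorsAntidiagonal] at hp hq
    exact hab (hp.1.symm.trans hq.1))]
  have hR : ∀ d ∈ Icc 1 N, ∑ m ∈ Icc 1 (N / d), f d m
      = ∑ p ∈ {d} ×ˢ Icc 1 (N / d), f p.1 p.2 := by
    intro d _
    rw [Finset.singleton_product, Finset.sum_map]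
    rfl
  rw [Finset.sum_congr rfl hR]
  rw [← Finset.sum_biUnion (by
    intro a _ b _ hab
    simp only [Finset.disjoint_left, Finset.mem_product, Finset.mem_singleton]
    rintro p ⟨rfl, -⟩ ⟨h, -⟩
    exact hab h)]
  congr 1
  ext ⟨d, m⟩
  simp only [Finset.mem_biUnion, Nat.mem_divisorsAntidiagonal, Finset.mem_product,
    Finset.mem_singleton, Finset.mem_Icc]
  constructor
  · rintro ⟨n, hn, h, -⟩
    have hd0 : d ≠ 0 := by rintro rfl; rw [zero_mul] at h; omega
    have hm0 : m ≠ 0 := by rintro rfl; rw [mul_zero] at h; omega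
    have hdpos : 0 < d := Nat.pos_of_ne_zero hd0
    have hdN : d ≤ N := by
      calc d ≤ d * m := Nat.le_mul_of_pos_right d (Nat.pos_of_ne_zero hm0)
        _ ≤ N := by omega
    refine ⟨d, ⟨⟨hdpos, hdN⟩, rfl, Nat.pos_of_ne_zero hm0,
      (Nat.le_div_iff_mul_le hdpos).2 (by rw [mul_comm]; omega)⟩⟩
  · rintro ⟨e, ⟨⟨he1, he2⟩, rfl, hm1, hm2⟩⟩
    have h := (Nat.le_div_iff_mul_le he1).1 hm2
    have hpos : 0 < d * m := Nat.mul_pos he1 hm1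
    exact ⟨d * m, ⟨hpos, by rw [mul_comm] at h; omega⟩, rfl, hpos.ne'⟩

lemma geom_sum_Icc (M : ℕ) : ∑ m ∈ Icc 1 M, ((2:ℤ) ^ m - 1) = 2 ^ (M + 1) - 2 - M := by
  induction M with
  | zero => simp
  | succ M ih =>
    rw [Finset.sum_Icc_succ_top (by omega), ih]
    push_cast
    ring

lemma S_eq (N : ℕ) :
    ∑ n ∈ Icc 1 N, ((Phi n : ℕ) : ℤ)
      = ∑ d ∈ Icc 1 N, μ d * (2 ^ (N / d + 1) - 2 - ((N / d : ℕ) : ℤ)) := by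
  rw [Finset.sum_congr rfl (fun n hn => phi_eq n (Finset.mem_Icc.1 hn).1),
    swap_divisors N (fun d m => μ d * (2 ^ m - 1))]
  refine Finset.sum_congr rfl fun d _ => ?_
  rw [← Finset.mul_sum, geom_sum_Icc]

lemma int_bound (N : ℕ) (hN : 2 ≤ N) :
    |(∑ d ∈ Icc 1 N, (μ d : ℤ) * (2 ^ (N / d + 1) - 2 - ((N / d : ℕ) : ℤ)))
        - 2 ^ (N + 1) + 2 ^ (N / 2 + 1)|
      ≤ ((N : ℤ) + 1) * (2 ^ (N / 3 + 1) + N + 2) := by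
  have hsplit : Icc 1 N = insert 1 (insert 2 (Icc 3 N)) := by
    ext x; simp [Finset.mem_Icc]; omega
  have h1 : (1:ℕ) ∉ insert 2 (Icc 3 N) := by simp [Finset.mem_Icc]
  have h2 : (2:ℕ) ∉ Icc 3 N := by simp
  rw [hsplit, Finset.sum_insert h1, Finset.sum_insert h2]
  have hmu1 : (μ 1 : ℤ) = 1 := by simp
  have hmu2 : (μ 2 : ℤ) = -1 := by
    simpa using ArithmeticFunction.moebius_apply_prime (p := 2) Nat.prime_two
  rw [hmu1, hmu2]
  simp only [Nat.div_one, one_mul, neg_one_mul]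
  have hrest : |∑ d ∈ Icc 3 N, (μ d : ℤ) * (2 ^ (N / d + 1) - 2 - ((N / d : ℕ) : ℤ))|
      ≤ ((N : ℤ) - 2) * (2 ^ (N / 3 + 1) + N + 2) := by
    calc |∑ d ∈ Icc 3 N, (μ d : ℤ) * (2 ^ (N / d + 1) - 2 - ((N / d : ℕ) : ℤ))|
        ≤ ∑ d ∈ Icc 3 N, |(μ d : ℤ) * (2 ^ (N / d + 1) - 2 - ((N / d : ℕ) : ℤ))| :=
          Finset.abs_sum_le_sum_abs _ _
      _ ≤ ∑ d ∈ Icc 3 N, ((2:ℤ) ^ (N / 3 + 1) + N + 2) := by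
          refine Finset.sum_le_sum fun d hd => ?_
          rw [Finset.mem_Icc] at hd
          rw [abs_mul]
          have hμ : |(μ d : ℤ)| ≤ 1 := ArithmeticFunction.abs_moebius_le_one
          have hdiv : N / d ≤ N / 3 := Nat.div_le_div_left hd.1 (by omega)
          have hdivN : N / d ≤ N := Nat.div_le_self N d
          have hpow : (2:ℤ) ^ (N / d + 1) ≤ 2 ^ (N / 3 + 1) :=
            pow_le_pow_right₀ (by norm_num) (by omega)
          have habs : |(2:ℤ) ^ (N / d + 1) - 2 - ((N / d : ℕ) : ℤ)| ≤ 2 ^ (N / 3 + 1) + N + 2 := by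
            rw [abs_le]
            have hp1 : (0:ℤ) ≤ 2 ^ (N / d + 1) := by positivity
            have hp2 : ((N / d : ℕ) : ℤ) ≤ (N : ℤ) := by exact_mod_cast hdivN
            have hp3 : (0:ℤ) ≤ ((N / d : ℕ) : ℤ) := by positivity
            constructor <;> omega
          calc |(μ d : ℤ)| * |2 ^ (N / d + 1) - 2 - ((N / d : ℕ) : ℤ)|
              ≤ 1 * |2 ^ (N / d + 1) - 2 - ((N / d : ℕ) : ℤ)| :=
                mul_le_mul_of_nonneg_right hμ (abs_nonneg _)
            _ = |2 ^ (N / d + 1) - 2 - ((N / d : ℕ) : ℤ)| := one_mul _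
            _ ≤ 2 ^ (N / 3 + 1) + N + 2 := habs
      _ = ((N : ℤ) - 2) * (2 ^ (N / 3 + 1) + N + 2) := by
          rw [Finset.sum_const, Nat.card_Icc, nsmul_eq_mul]
          congr 1
          omega
  have hNd2 : ((N / 2 : ℕ) : ℤ) ≤ N := by exact_mod_cast Nat.div_le_self N 2
  have hNd2' : (0:ℤ) ≤ ((N / 2 : ℕ) : ℤ) := by positivity
  have hX : (0:ℤ) ≤ 2 ^ (N / 3 + 1) + N + 2 := by positivity
  have hfirst : |(2:ℤ) ^ (N + 1) - 2 - N + -(2 ^ (N / 2 + 1) - 2 - ((N / 2 : ℕ) : ℤ))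
      - 2 ^ (N + 1) + 2 ^ (N / 2 + 1)| ≤ N := by
    have h1 : (2:ℤ) ^ (N + 1) - 2 - N + -(2 ^ (N / 2 + 1) - 2 - ((N / 2 : ℕ) : ℤ))
        - 2 ^ (N + 1) + 2 ^ (N / 2 + 1) = ((N / 2 : ℕ) : ℤ) - N := by ring
    rw [h1, abs_le]
    omega
  calc |(2:ℤ) ^ (N + 1) - 2 - N + (-(2 ^ (N / 2 + 1) - 2 - ((N / 2 : ℕ) : ℤ))
          + ∑ d ∈ Icc 3 N, (μ d : ℤ) * (2 ^ (N / d + 1) - 2 - ((N / d : ℕ) : ℤ)))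
        - 2 ^ (N + 1) + 2 ^ (N / 2 + 1)|
      = |((2:ℤ) ^ (N + 1) - 2 - N + -(2 ^ (N / 2 + 1) - 2 - ((N / 2 : ℕ) : ℤ))
          - 2 ^ (N + 1) + 2 ^ (N / 2 + 1))
          + ∑ d ∈ Icc 3 N, (μ d : ℤ) * (2 ^ (N / d + 1) - 2 - ((N / d : ℕ) : ℤ))| := by
        congr 1; ring
    _ ≤ (N : ℤ) + ((N : ℤ) - 2) * (2 ^ (N / 3 + 1) + N + 2) :=
        le_trans (abs_add_le _ _) (add_le_add hfirst hrest)
    _ ≤ ((N : ℤ) + 1) * (2 ^ (N / 3 + 1) + N + 2) := by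
        have hXge : (N:ℤ) ≤ 2 ^ (N / 3 + 1) + N + 2 := by
          have : (0:ℤ) ≤ 2 ^ (N / 3 + 1) := by positivity
          omega
        nlinarith [hX, hXge]

noncomputable def Efun (N : ℕ) : ℝ :=
  |(∑ n ∈ Finset.Icc 1 N, (Phi n : ℝ)) - 2 ^ (N + 1)| / (2 : ℝ) ^ ((N : ℝ) / 2)

noncomputable def ffun (N : ℕ) : ℝ :=
  (2 : ℝ) ^ (N / 2 + 1) / (2 : ℝ) ^ ((N : ℝ) / 2)

noncomputable def gfun (N : ℕ) : ℝ :=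
  ((N : ℝ) + 1) * (2 ^ (N / 3 + 1) + N + 2) / (2 : ℝ) ^ ((N : ℝ) / 2)

lemma rpow_den_pos (N : ℕ) : (0:ℝ) < (2 : ℝ) ^ ((N : ℝ) / 2) := Real.rpow_pos_of_pos two_pos _

lemma Efun_nonneg (N : ℕ) : 0 ≤ Efun N :=
  div_nonneg (abs_nonneg _) (rpow_den_pos N).le

lemma gfun_nonneg (N : ℕ) : 0 ≤ gfun N := by
  rw [gfun]
  positivity

lemma hclose (N : ℕ) (hN : 2 ≤ N) : |Efun N - ffun N| ≤ gfun N := by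
  have hden := rpow_den_pos N
  rw [Efun, ffun, gfun, div_sub_div_same, abs_div, abs_of_pos hden,
    div_le_div_iff_of_pos_right hden]
  have hcast : (∑ n ∈ Finset.Icc 1 N, (Phi n : ℝ))
      = ((∑ n ∈ Icc 1 N, ((Phi n : ℕ) : ℤ) : ℤ) : ℝ) := by
    push_cast; rfl
  set D : ℝ := (∑ n ∈ Finset.Icc 1 N, (Phi n : ℝ)) - 2 ^ (N + 1) with hD
  have key : |(|D| - 2 ^ (N / 2 + 1))| ≤ |D + 2 ^ (N / 2 + 1)| := by
    have h := abs_abs_sub_abs_le_abs_sub D (-(2 ^ (N / 2 + 1) : ℝ))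
    rwa [abs_neg, abs_of_pos (by positivity : (0:ℝ) < (2:ℝ) ^ (N / 2 + 1)),
      sub_neg_eq_add] at h
  refine key.trans ?_
  have hid : D + 2 ^ (N / 2 + 1)
      = (((∑ d ∈ Icc 1 N, (μ d : ℤ) * (2 ^ (N / d + 1) - 2 - ((N / d : ℕ) : ℤ)))
          - 2 ^ (N + 1) + 2 ^ (N / 2 + 1) : ℤ) : ℝ) := by
    rw [hD, hcast, S_eq]
    push_cast
    ring
  rw [hid, ← Int.cast_abs]
  have h := int_bound N hN
  calc ((|(∑ d ∈ Icc 1 N, (μ d : ℤ) * (2 ^ (N / d + 1) - 2 - ((N / d : ℕ) : ℤ)))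
          - 2 ^ (N + 1) + 2 ^ (N / 2 + 1)| : ℤ) : ℝ)
      ≤ ((((N : ℤ) + 1) * (2 ^ (N / 3 + 1) + N + 2) : ℤ) : ℝ) := by exact_mod_cast h
    _ = ((N : ℝ) + 1) * (2 ^ (N / 3 + 1) + N + 2) := by push_cast; ring

lemma gfun_tendsto : Tendsto gfun atTop (nhds 0) := by
  set r : ℝ := (2 : ℝ) ^ (-(1/6) : ℝ) with hr
  have hr0 : 0 ≤ r := (Real.rpow_pos_of_pos two_pos _).le
  have hr1 : r < 1 := Real.rpow_lt_one_of_one_lt_of_neg one_lt_two (by norm_num)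
  have hbound : ∀ᶠ N : ℕ in atTop, gfun N ≤ 8 * ((N : ℝ) ^ 2 * r ^ N) := by
    filter_upwards [eventually_ge_atTop 2] with N hN
    have hN2 : (2:ℝ) ≤ (N:ℝ) := by exact_mod_cast hN
    have hden := rpow_den_pos N
    rw [gfun, div_le_iff₀ hden]
    have hrn : r ^ N = (2:ℝ) ^ (-(N:ℝ)/6) := by
      rw [hr, ← Real.rpow_natCast ((2:ℝ) ^ (-(1/6) : ℝ)) N, ← Real.rpow_mul two_pos.le]
      congr 1
      ring
    have hmul : r ^ N * (2:ℝ) ^ ((N:ℝ)/2) = (2:ℝ) ^ ((N:ℝ)/3) := by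
      rw [hrn, ← Real.rpow_add two_pos]
      congr 1
      ring
    set a : ℝ := (2:ℝ) ^ ((N:ℝ)/3) with ha
    have ha1 : (1:ℝ) ≤ a := by
      rw [ha, show (1:ℝ) = (2:ℝ) ^ (0:ℝ) from (Real.rpow_zero 2).symm]
      exact Real.rpow_le_rpow_of_exponent_le one_le_two (by positivity)
    have hpow3 : (2:ℝ) ^ (N / 3 + 1) ≤ 2 * a := by
      rw [pow_succ, mul_comm]
      refine mul_le_mul_of_nonneg_left ?_ (by norm_num)
      rw [← Real.rpow_natCast 2 (N / 3), ha]
      exact Real.rpow_le_rpow_of_exponent_le one_le_two Nat.cast_div_le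
    calc ((N : ℝ) + 1) * (2 ^ (N / 3 + 1) + N + 2)
        ≤ ((N : ℝ) + 1) * (2 * a + N + 2) := by nlinarith
      _ ≤ (2 * (N:ℝ)) * (2 * a + 2 * (N:ℝ) * a) := by
          nlinarith [hN2, ha1, mul_le_mul_of_nonneg_left ha1 (sq_nonneg (N:ℝ)),
            mul_le_mul_of_nonneg_left ha1 (by positivity : (0:ℝ) ≤ (N:ℝ))]
      _ = 4*(N:ℝ)*a + 4*(N:ℝ)^2*a := by ring
      _ ≤ 8*(N:ℝ)^2*a := by
          have hna : (N:ℝ) ≤ (N:ℝ)^2 := by nlinarith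
          nlinarith [mul_le_mul_of_nonneg_right hna (by linarith : (0:ℝ) ≤ a)]
      _ = 8 * ((N : ℝ) ^ 2 * r ^ N) * (2:ℝ) ^ ((N:ℝ)/2) := by
          rw [← hmul]
          ring
  have h0 : Tendsto (fun N : ℕ => (8:ℝ) * ((N : ℝ) ^ 2 * r ^ N)) atTop (nhds 0) := by
    have := (tendsto_pow_const_mul_const_pow_of_lt_one 2 hr0 hr1).const_mul (8:ℝ)
    simpa using this
  exact squeeze_zero' (Eventually.of_forall gfun_nonneg) hbound h0

lemma ffun_even (k : ℕ) : ffun (2 * k) = 2 := by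
  rw [ffun, show 2 * k / 2 = k by omega,
    ← Real.rpow_natCast (2:ℝ) (k + 1), ← Real.rpow_sub two_pos]
  rw [show ((k + 1 : ℕ) : ℝ) - ((2 * k : ℕ) : ℝ) / 2 = 1 by push_cast; ring, Real.rpow_one]

lemma ffun_odd (k : ℕ) : ffun (2 * k + 1) = Real.sqrt 2 := by
  rw [ffun, show (2 * k + 1) / 2 = k by omega,
    ← Real.rpow_natCast (2:ℝ) (k + 1), ← Real.rpow_sub two_pos, Real.sqrt_eq_rpow]
  congr 1
  push_cast
  ring

lemma sqrt_two_le_two : Real.sqrt 2 ≤ 2 := by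
  calc Real.sqrt 2 ≤ Real.sqrt (2 ^ 2) := Real.sqrt_le_sqrt (by norm_num)
    _ = 2 := Real.sqrt_sq (by norm_num)

lemma ffun_bounds (N : ℕ) : Real.sqrt 2 ≤ ffun N ∧ ffun N ≤ 2 := by
  rcases Nat.even_or_odd N with ⟨k, hk⟩ | ⟨k, hk⟩
  · rw [show N = 2 * k by omega, ffun_even]
    exact ⟨sqrt_two_le_two, le_refl 2⟩
  · rw [show N = 2 * k + 1 by omega, ffun_odd]
    exact ⟨le_refl _, sqrt_two_le_two⟩

lemma ev_le {ε : ℝ} (hε : 0 < ε) : ∀ᶠ N in atTop, Efun N ≤ 2 + ε := by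
  filter_upwards [gfun_tendsto.eventually_lt_const hε, eventually_ge_atTop 2] with N h1 h2
  have hc := abs_le.1 (hclose N h2)
  have hf := (ffun_bounds N).2
  linarith [hc.2]

lemma ev_ge {ε : ℝ} (hε : 0 < ε) : ∀ᶠ N in atTop, Real.sqrt 2 - ε ≤ Efun N := by
  filter_upwards [gfun_tendsto.eventually_lt_const hε, eventually_ge_atTop 2] with N h1 h2
  have hc := abs_le.1 (hclose N h2)
  have hf := (ffun_bounds N).1
  linarith [hc.1]

lemma freq_ge {ε : ℝ} (hε : 0 < ε) : ∃ᶠ N in atTop, 2 - ε ≤ Efun N := by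
  rw [frequently_atTop]
  intro m
  obtain ⟨M, hM⟩ := eventually_atTop.1
    ((gfun_tendsto.eventually_lt_const hε).and (eventually_ge_atTop 2))
  refine ⟨2 * max m M, by have := le_max_left m M; omega, ?_⟩
  obtain ⟨h1, h2⟩ := hM (2 * max m M) (by have := le_max_right m M; omega)
  have hc := abs_le.1 (hclose _ h2)
  rw [ffun_even] at hc
  linarith [hc.1]

lemma freq_le {ε : ℝ} (hε : 0 < ε) : ∃ᶠ N in atTop, Efun N ≤ Real.sqrt 2 + ε := by
  rw [frequently_atTop]
  intro m
  obtain ⟨M, hM⟩ := eventually_atTop.1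
    ((gfun_tendsto.eventually_lt_const hε).and (eventually_ge_atTop 2))
  refine ⟨2 * max m M + 1, by have := le_max_left m M; omega, ?_⟩
  obtain ⟨h1, h2⟩ := hM (2 * max m M + 1) (by have := le_max_right m M; omega)
  have hc := abs_le.1 (hclose _ h2)
  rw [ffun_odd] at hc
  linarith [hc.2]

/-- `limsup = 2` and `liminf = √2` for `|∑_{n ≤ N} Φ(n) - 2^{N+1}| / 2^{N/2}`. -/
theorem limsup_liminf_Phi_error :
    Filter.limsup
      (fun N : ℕ => |(∑ n ∈ Finset.Icc 1 N, (Phi n : ℝ)) - 2 ^ (N + 1)| /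
        (2 : ℝ) ^ ((N : ℝ) / 2)) Filter.atTop = 2 ∧
    Filter.liminf
      (fun N : ℕ => |(∑ n ∈ Finset.Icc 1 N, (Phi n : ℝ)) - 2 ^ (N + 1)| /
        (2 : ℝ) ^ ((N : ℝ) / 2)) Filter.atTop = Real.sqrt 2 := by
  have hE : (fun N : ℕ => |(∑ n ∈ Finset.Icc 1 N, (Phi n : ℝ)) - 2 ^ (N + 1)| /
      (2 : ℝ) ^ ((N : ℝ) / 2)) = Efun := rfl
  rw [hE]
  constructor
  · rw [Filter.limsup_eq]
    apply le_antisymm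
    · refine le_of_forall_pos_le_add fun ε hε => ?_
      refine csInf_le ⟨0, fun a ha => ?_⟩ (ev_le hε)
      obtain ⟨N, hN⟩ := ha.exists
      exact le_trans (Efun_nonneg N) hN
    · refine le_csInf ⟨2 + 1, ev_le one_pos⟩ fun a ha => ?_
      refine le_of_forall_pos_le_add fun ε hε => ?_
      obtain ⟨N, h1, h2⟩ := ((freq_ge hε).and_eventually ha).exists
      linarith
  · rw [Filter.liminf_eq]
    apply le_antisymm
    · refine csSup_le ⟨0, Eventually.of_forall Efun_nonneg⟩ fun a ha => ?_
      refine le_of_forall_pos_le_add fun ε hε => ?_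
      obtain ⟨N, h1, h2⟩ := ((freq_le hε).and_eventually ha).exists
      linarith
    · refine le_of_forall_pos_le_add fun ε hε => ?_
      have hb : BddAbove {a : ℝ | ∀ᶠ n in atTop, a ≤ Efun n} := by
        refine ⟨2 + 1, fun a ha => ?_⟩
        obtain ⟨N, h1, h2⟩ := (ha.and (ev_le one_pos)).exists
        linarith
      have := le_csSup hb (ev_ge hε)
      linarith
end
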